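/- Let $1 < p < \infty$. There exists a constant $C$ depending only on $p$ and the dimension $n$ such that for every $h \in L^1_{loc}(\mathbb{R}^n)$, $h \ne 0$, with $Mh < \infty$ almost everywhere, the weight $w = (Mh)^{1-p}$ satisfies $[w]_{A_p^{\mathcal{R}}} \le C$. More precisely, one may take $[w]_{A_p^{\mathcal{R}}}^p \le \left( 2 \kappa_n \right)^{p-1}$ where $\kappa_n$ depends only on $n$. -/

import Mathlib

open MeasureTheory
open scoped ENNReal

/-- The open axis-parallel cube with lower corner `c` and side length `l` in `ℝⁿ`. -/
def cube (n : ℕ) (c : Fin n → ℝ) (l : ℝ) : Set (Fin n → ℝ) :=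
  Set.univ.pi fun i => Set.Ioo (c i) (c i + l)

/-- The Hardy–Littlewood maximal function over axis-parallel cubes (with `[0,∞]` values):
`Mh(x) = sup_{Q ∋ x} (1/|Q|) ∫_Q |h|`. -/
noncomputable def maxFn (n : ℕ) (h : (Fin n → ℝ) → ℝ) (x : Fin n → ℝ) : ℝ≥0∞ :=
  ⨆ (c : Fin n → ℝ) (l : ℝ) (_ : 0 < l) (_ : x ∈ cube n c l),
    (∫⁻ y in cube n c l, ENNReal.ofReal |h y|) / volume (cube n c l)

/-- The weak `L^{p,∞}(μ)` quasi-norm. -/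
noncomputable def wkNormMu {X : Type*} [MeasurableSpace X] (μ : Measure X) (p : ℝ)
    (g : X → ℝ) : ℝ≥0∞ :=
  ⨆ (t : ℝ) (_ : 0 < t), ENNReal.ofReal t * μ {x | t < |g x|} ^ (1 / p)

/-- `[w]_{A_p^𝓡} = sup_Q w(Q)^{1/p} ‖χ_Q w⁻¹‖_{L^{p',∞}(w)} / |Q|`. -/
noncomputable def ApRConst (n : ℕ) (p : ℝ) (w : (Fin n → ℝ) → ℝ) : ℝ≥0∞ :=
  ⨆ (c : Fin n → ℝ) (l : ℝ) (_ : 0 < l),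
    (volume.withDensity fun x => ENNReal.ofReal (w x)) (cube n c l) ^ (1 / p) *
      wkNormMu (volume.withDensity fun x => ENNReal.ofReal (w x)) (p / (p - 1))
        ((cube n c l).indicator fun x => (w x)⁻¹) / volume (cube n c l)

/-!
Fix a cube `Q` and put `B = inf_Q Mh`, which is positive (as `h ≠ 0`) and finite (as `Mh < ∞`
a.e.). As `w = (Mh)^{1-p} ≤ B^{1-p}` on `Q`, we get `w(Q) ≤ B^{1-p} |Q|`. On the level set
`{Mh > a}` we have `w ≤ a^{1-p}`, so the weak `L^{p'}(w)` norm of `χ_Q w⁻¹ = χ_Q (Mh)^{p-1}` is at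
most `(sup_a a |Q ∩ {Mh > a}|)^{1/p'}`. Splitting `h = h χ_{3Q} + h χ_{(3Q)ᶜ}`, the second part
has maximal function at most `3ⁿ B` on `Q`, and the weak type `(1,1)` bound for the first part
gives `a |Q ∩ {Mh > a}| ≤ 2 · 24ⁿ B |Q|`. In the product the powers of `B` cancel, leaving
`[w]_{A_p^𝓡} ≤ (2 · 24ⁿ)^{1/p'}`.
-/

open Set Metric

section Cube

variable {n : ℕ}

theorem mem_cube {c : Fin n → ℝ} {l : ℝ} {x : Fin n → ℝ} :
    x ∈ cube n c l ↔ ∀ i, c i < x i ∧ x i < c i + l := by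
  simp [cube]

theorem isOpen_cube (c : Fin n → ℝ) (l : ℝ) : IsOpen (cube n c l) :=
  isOpen_set_pi finite_univ fun _ _ => isOpen_Ioo

theorem measurableSet_cube (c : Fin n → ℝ) (l : ℝ) : MeasurableSet (cube n c l) :=
  (isOpen_cube c l).measurableSet

theorem cube_subset_cube {c c' : Fin n → ℝ} {l l' : ℝ} (hc : ∀ i, c' i ≤ c i)
    (hcl : ∀ i, c i + l ≤ c' i + l') : cube n c l ⊆ cube n c' l' :=
  pi_mono fun i _ => Ioo_subset_Ioo (hc i) (hcl i)

theorem cube_subset_closedBall {c x : Fin n → ℝ} {l : ℝ} (hl : 0 < l) (hx : x ∈ cube n c l) :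
    cube n c l ⊆ closedBall x l := by
  intro y hy
  rw [mem_closedBall, dist_pi_le_iff hl.le]
  intro i
  have hxi := mem_cube.1 hx i
  have hyi := mem_cube.1 hy i
  rw [Real.dist_eq, abs_le]
  constructor <;> linarith

theorem volume_cube (c : Fin n → ℝ) (l : ℝ) :
    volume (cube n c l) = ENNReal.ofReal l ^ n := by
  simp [cube, volume_pi_pi, Real.volume_Ioo]

theorem volume_cube_ne_zero (c : Fin n → ℝ) {l : ℝ} (hl : 0 < l) : volume (cube n c l) ≠ 0 := by
  simp [volume_cube, hl]

theorem volume_cube_ne_top (c : Fin n → ℝ) (l : ℝ) : volume (cube n c l) ≠ ⊤ := by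
  simp [volume_cube]

theorem volume_cube_mul (c c' : Fin n → ℝ) (l : ℝ) {k : ℝ} (hk : 0 ≤ k) :
    volume (cube n c' (k * l)) = ENNReal.ofReal k ^ n * volume (cube n c l) := by
  rw [volume_cube, volume_cube, ENNReal.ofReal_mul hk, mul_pow]

-- Balls of `Fin n → ℝ` are balls of the sup norm, i.e. cubes of side `2r`.
theorem volume_closedBall_le_volume_cube (x c : Fin n → ℝ) {l : ℝ} (hl : 0 ≤ l) :
    volume (closedBall x (4 * l)) ≤ 8 ^ n * volume (cube n c l) := by
  rw [Real.volume_pi_closedBall x (by positivity), volume_cube, Fintype.card_fin,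
    ← mul_assoc, ENNReal.ofReal_pow (by positivity), ENNReal.ofReal_mul (by norm_num), mul_pow]
  norm_num

end Cube

section MaximalFunction

variable {n : ℕ}

theorem le_maxFn (h : (Fin n → ℝ) → ℝ) {x c : Fin n → ℝ} {l : ℝ} (hl : 0 < l)
    (hx : x ∈ cube n c l) :
    (∫⁻ y in cube n c l, ENNReal.ofReal |h y|) / volume (cube n c l) ≤ maxFn n h x :=
  le_iSup₂_of_le c l <| le_iSup₂_of_le (f := fun _ (_ : x ∈ cube n c l) => _) hl hx le_rfl

theorem maxFn_le {h : (Fin n → ℝ) → ℝ} {x : Fin n → ℝ} {m : ℝ≥0∞}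
    (H : ∀ c l, 0 < l → x ∈ cube n c l →
      (∫⁻ y in cube n c l, ENNReal.ofReal |h y|) / volume (cube n c l) ≤ m) :
    maxFn n h x ≤ m :=
  iSup₂_le fun c l => iSup₂_le fun hl hx => H c l hl hx

theorem lowerSemicontinuous_maxFn (h : (Fin n → ℝ) → ℝ) : LowerSemicontinuous (maxFn n h) := by
  refine lowerSemicontinuous_iff_isOpen_preimage.2 fun t => isOpen_iff_mem_nhds.2 fun x hx => ?_
  obtain ⟨c, l, hl, hxc, hlt⟩ : ∃ c l, 0 < l ∧ x ∈ cube n c l ∧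
      t < (∫⁻ y in cube n c l, ENNReal.ofReal |h y|) / volume (cube n c l) := by
    simpa only [mem_preimage, mem_Ioi, maxFn, lt_iSup_iff, exists_prop] using hx
  exact Filter.mem_of_superset ((isOpen_cube c l).mem_nhds hxc) fun y hy =>
    hlt.trans_le (le_maxFn h hl hy)

theorem measurable_maxFn (h : (Fin n → ℝ) → ℝ) : Measurable (maxFn n h) :=
  (lowerSemicontinuous_maxFn h).measurable

theorem maxFn_mono {g h : (Fin n → ℝ) → ℝ} (hgh : ∀ z, |g z| ≤ |h z|) (x : Fin n → ℝ) :
    maxFn n g x ≤ maxFn n h x :=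
  maxFn_le fun _ _ hl hx => le_trans
    (ENNReal.div_le_div_right (lintegral_mono fun y => ENNReal.ofReal_le_ofReal (hgh y)) _)
    (le_maxFn h hl hx)

theorem maxFn_le_add {f g h : (Fin n → ℝ) → ℝ} (hfgh : ∀ z, |f z| ≤ |g z| + |h z|)
    (hg : Measurable g) (x : Fin n → ℝ) :
    maxFn n f x ≤ maxFn n g x + maxFn n h x := by
  refine maxFn_le fun c l hl hx => ?_
  calc (∫⁻ y in cube n c l, ENNReal.ofReal |f y|) / volume (cube n c l)
      ≤ (∫⁻ y in cube n c l, ENNReal.ofReal |g y| + ENNReal.ofReal |h y|) /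
          volume (cube n c l) := by
        gcongr with y
        rw [← ENNReal.ofReal_add (abs_nonneg _) (abs_nonneg _)]
        exact ENNReal.ofReal_le_ofReal (hfgh y)
    _ = (∫⁻ y in cube n c l, ENNReal.ofReal |g y|) / volume (cube n c l) +
        (∫⁻ y in cube n c l, ENNReal.ofReal |h y|) / volume (cube n c l) := by
        rw [lintegral_add_left hg.abs.ennreal_ofReal, ENNReal.add_div]
    _ ≤ maxFn n g x + maxFn n h x := add_le_add (le_maxFn g hl hx) (le_maxFn h hl hx)

end MaximalFunction

section WeakType

variable {n : ℕ}

theorem exists_pairwiseDisjoint_volume_biUnion_cube_le {ι : Type*} (s : Finset ι)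
    (x c : ι → Fin n → ℝ) (l : ι → ℝ) (hl : ∀ i ∈ s, 0 < l i)
    (hx : ∀ i ∈ s, x i ∈ cube n (c i) (l i)) :
    ∃ u ⊆ s, (u : Set ι).PairwiseDisjoint (fun i => cube n (c i) (l i)) ∧
      volume (⋃ i ∈ s, cube n (c i) (l i)) ≤ 8 ^ n * ∑ i ∈ u, volume (cube n (c i) (l i)) := by
  obtain ⟨R, hR⟩ := (s.finite_toSet.image l).bddAbove
  obtain ⟨u, hus, hdisj, hcov⟩ := Vitali.exists_disjoint_subfamily_covering_enlargement_closedBall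
    (s : Set ι) x l R (fun i hi => hR (mem_image_of_mem l hi)) 4 (by norm_num)
  lift u to Finset ι using s.finite_toSet.subset hus
  refine ⟨u, Finset.coe_subset.1 hus,
    hdisj.mono_on fun i hi => cube_subset_closedBall (hl i (hus hi)) (hx i (hus hi)), ?_⟩
  have hsub : ⋃ i ∈ s, cube n (c i) (l i) ⊆ ⋃ j ∈ u, closedBall (x j) (4 * l j) := by
    refine iUnion₂_subset fun i hi => ?_
    obtain ⟨j, hj, hij⟩ := hcov i hi
    exact (cube_subset_closedBall (hl i hi) (hx i hi)).trans (hij.trans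
      (subset_biUnion_of_mem (u := fun j => closedBall (x j) (4 * l j)) (Finset.mem_coe.2 hj)))
  calc volume (⋃ i ∈ s, cube n (c i) (l i))
      ≤ ∑ j ∈ u, volume (closedBall (x j) (4 * l j)) :=
        (measure_mono hsub).trans (measure_biUnion_finset_le _ _)
    _ ≤ ∑ j ∈ u, 8 ^ n * volume (cube n (c j) (l j)) := by
        gcongr with j hj
        exact volume_closedBall_le_volume_cube _ _ (hl j (hus hj)).le
    _ = 8 ^ n * ∑ j ∈ u, volume (cube n (c j) (l j)) := Finset.mul_sum _ _ _ |>.symm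

theorem mul_volume_le_of_isCompact_of_lt_maxFn (g : (Fin n → ℝ) → ℝ) {K : Set (Fin n → ℝ)}
    (hK : IsCompact K) {t : ℝ≥0∞} (hKt : ∀ x ∈ K, t < maxFn n g x) :
    t * volume K ≤ 8 ^ n * ∫⁻ y, ENNReal.ofReal |g y| := by
  have hcube : ∀ x ∈ K, ∃ c l, 0 < l ∧ x ∈ cube n c l ∧
      t * volume (cube n c l) ≤ ∫⁻ y in cube n c l, ENNReal.ofReal |g y| := by
    intro x hx
    obtain ⟨c, l, hl, hxc, hlt⟩ : ∃ c l, 0 < l ∧ x ∈ cube n c l ∧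
        t < (∫⁻ y in cube n c l, ENNReal.ofReal |g y|) / volume (cube n c l) := by
      simpa only [maxFn, lt_iSup_iff, exists_prop] using hKt x hx
    exact ⟨c, l, hl, hxc, ((ENNReal.lt_div_iff_mul_lt (.inl (volume_cube_ne_zero c hl))
      (.inl (volume_cube_ne_top c l))).1 hlt).le⟩
  choose! c l hl hxc hint using hcube
  obtain ⟨s, hsK, hKs⟩ := hK.elim_nhds_subcover (fun x => cube n (c x) (l x))
    fun x hx => (isOpen_cube _ _).mem_nhds (hxc x hx)
  obtain ⟨u, hus, hdisj, hvol⟩ := exists_pairwiseDisjoint_volume_biUnion_cube_le s id c l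
    (fun x hx => hl x (hsK x hx)) (fun x hx => hxc x (hsK x hx))
  calc t * volume K
      ≤ t * (8 ^ n * ∑ x ∈ u, volume (cube n (c x) (l x))) :=
        mul_le_mul_right ((measure_mono hKs).trans hvol) t
    _ = 8 ^ n * ∑ x ∈ u, t * volume (cube n (c x) (l x)) := by
        simp only [Finset.mul_sum, mul_left_comm]
    _ ≤ 8 ^ n * ∑ x ∈ u, ∫⁻ y in cube n (c x) (l x), ENNReal.ofReal |g y| := by
        gcongr with x hx
        exact hint x (hsK x (hus hx))
    _ = 8 ^ n * ∫⁻ y in ⋃ x ∈ u, cube n (c x) (l x), ENNReal.ofReal |g y| := by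
        rw [lintegral_biUnion_finset hdisj fun _ _ => measurableSet_cube _ _]
    _ ≤ 8 ^ n * ∫⁻ y, ENNReal.ofReal |g y| :=
        mul_le_mul_right (setLIntegral_le_lintegral _ _) _

theorem mul_volume_lt_maxFn_le (g : (Fin n → ℝ) → ℝ) (t : ℝ≥0∞) :
    t * volume {x | t < maxFn n g x} ≤ 8 ^ n * ∫⁻ y, ENNReal.ofReal |g y| := by
  have hopen : IsOpen {x | t < maxFn n g x} := (lowerSemicontinuous_maxFn g).isOpen_preimage t
  rw [hopen.measure_eq_iSup_isCompact, ENNReal.mul_iSup]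
  refine iSup_le fun K => ?_
  simp only [ENNReal.mul_iSup]
  exact iSup₂_le fun hKt hK => mul_volume_le_of_isCompact_of_lt_maxFn g hK fun x hx => hKt hx

end WeakType

section FarPart

variable {n : ℕ}

theorem setLIntegral_cube_le_maxFn_mul (h : (Fin n → ℝ) → ℝ) {x c : Fin n → ℝ} {l : ℝ}
    (hl : 0 < l) (hx : x ∈ cube n c l) :
    ∫⁻ y in cube n c l, ENNReal.ofReal |h y| ≤ maxFn n h x * volume (cube n c l) :=
  (ENNReal.div_le_iff_le_mul (.inl (volume_cube_ne_zero c hl)) (.inl (volume_cube_ne_top c l))).1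
    (le_maxFn h hl hx)

theorem lt_of_not_cube_subset_cube_dilate {c a x : Fin n → ℝ} {l r : ℝ} (hxQ : x ∈ cube n c l)
    (hxR : x ∈ cube n a r) (hR : ¬ cube n a r ⊆ cube n (fun i => c i - l) (3 * l)) : l < r := by
  obtain ⟨z, hzR, hzQ⟩ := not_subset.1 hR
  obtain ⟨i, hi⟩ : ∃ i, ¬ (c i - l < z i ∧ z i < c i - l + 3 * l) := by
    simpa [mem_cube] using hzQ
  have hxi := mem_cube.1 hxQ i
  have hxRi := mem_cube.1 hxR i
  have hzi := mem_cube.1 hzR i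
  rw [not_and_or, not_lt, not_lt] at hi
  rcases hi with hi | hi <;> linarith

theorem maxFn_le_three_pow_mul_maxFn {c : Fin n → ℝ} {l : ℝ} (hl : 0 < l)
    {g : (Fin n → ℝ) → ℝ} (hg : ∀ z ∈ cube n (fun i => c i - l) (3 * l), g z = 0)
    {x y : Fin n → ℝ} (hx : x ∈ cube n c l) (hy : y ∈ cube n c l) :
    maxFn n g x ≤ 3 ^ n * maxFn n g y := by
  refine maxFn_le fun a r hr hxR => ?_
  by_cases hR : cube n a r ⊆ cube n (fun i => c i - l) (3 * l)
  · have hzero : ∀ z ∈ cube n a r, ENNReal.ofReal |g z| = 0 := fun z hz => by simp [hg z (hR hz)]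
    simp [setLIntegral_congr_fun (measurableSet_cube a r) hzero]
  -- `R = cube n a r` is larger than `Q`, so widening it by `l` on each side gives a cube that
  -- contains `y` and has volume at most `3ⁿ |R|`.
  have hlr := lt_of_not_cube_subset_cube_dilate hx hxR hR
  have hxi := mem_cube.1 hx
  have hxRi := mem_cube.1 hxR
  have hyi := mem_cube.1 hy
  have hyR' : y ∈ cube n (fun i => a i - l) (r + 2 * l) := mem_cube.2 fun i =>
    ⟨by linarith [hyi i, hxi i, hxRi i], by linarith [hyi i, hxi i, hxRi i]⟩
  have hvol : volume (cube n (fun i => a i - l) (r + 2 * l)) ≤ 3 ^ n * volume (cube n a r) :=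
    calc volume (cube n (fun i => a i - l) (r + 2 * l))
        = ENNReal.ofReal (r + 2 * l) ^ n := volume_cube _ _
      _ ≤ ENNReal.ofReal (3 * r) ^ n := by gcongr; linarith
      _ = 3 ^ n * volume (cube n a r) := by
        rw [volume_cube, ENNReal.ofReal_mul (by norm_num), mul_pow, ENNReal.ofReal_ofNat]
  refine ENNReal.div_le_of_le_mul ?_
  calc ∫⁻ z in cube n a r, ENNReal.ofReal |g z|
      ≤ ∫⁻ z in cube n (fun i => a i - l) (r + 2 * l), ENNReal.ofReal |g z| :=
        lintegral_mono_set (cube_subset_cube (fun i => by linarith) fun i => by linarith)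
    _ ≤ maxFn n g y * (3 ^ n * volume (cube n a r)) :=
        (setLIntegral_cube_le_maxFn_mul g (by linarith) hyR').trans (by gcongr)
    _ = 3 ^ n * maxFn n g y * volume (cube n a r) := by ring

end FarPart

section InfimumOnCube

variable {n : ℕ}

def centeredCube (n m : ℕ) : Set (Fin n → ℝ) :=
  cube n (fun _ => -(m : ℝ)) (2 * m)

theorem centeredCube_mono : Monotone (centeredCube n) := fun m m' hm => by
  have : (m : ℝ) ≤ m' := Nat.cast_le.2 hm
  exact cube_subset_cube (fun _ => by linarith) fun _ => by linarith

theorem exists_cube_subset_centeredCube (c : Fin n → ℝ) (l : ℝ) :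
    ∃ m : ℕ, cube n c l ⊆ centeredCube n m := by
  obtain ⟨m, hm⟩ := exists_nat_gt (‖c‖ + |l|)
  refine ⟨m, cube_subset_cube (fun i => ?_) fun i => ?_⟩ <;>
  · have hci := abs_le.1 ((Real.norm_eq_abs _).symm.trans_le (norm_le_pi_norm c i))
    linarith [le_abs_self l, abs_nonneg l]

theorem iUnion_centeredCube : ⋃ m, centeredCube n m = univ :=
  eq_univ_of_forall fun x => mem_iUnion.2 <|
    (exists_cube_subset_centeredCube (fun i => x i - 1) 2).imp fun _ hm =>
      hm (mem_cube.2 fun _ => ⟨by linarith, by linarith⟩)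

theorem exists_lintegral_centeredCube_pos {h : (Fin n → ℝ) → ℝ} (hh : Measurable h)
    (hne : ¬ ∀ᵐ x ∂volume, h x = 0) :
    ∃ m, 0 < ∫⁻ z in centeredCube n m, ENNReal.ofReal |h z| := by
  by_contra! hzero
  simp only [nonpos_iff_eq_zero] at hzero
  have hint : ∫⁻ z, ENNReal.ofReal |h z| = 0 := by
    rw [← setLIntegral_univ, ← iUnion_centeredCube]
    exact nonpos_iff_eq_zero.1 ((lintegral_iUnion_le _ _).trans (by simp [hzero]))
  refine hne ?_
  filter_upwards [(lintegral_eq_zero_iff hh.abs.ennreal_ofReal).1 hint] with z hz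
  simpa using hz

theorem iInf_maxFn_ne_zero {h : (Fin n → ℝ) → ℝ} (hh : Measurable h)
    (hne : ¬ ∀ᵐ x ∂volume, h x = 0) (c : Fin n → ℝ) (l : ℝ) :
    ⨅ x ∈ cube n c l, maxFn n h x ≠ 0 := by
  obtain ⟨m₁, hm₁⟩ := exists_lintegral_centeredCube_pos hh hne
  obtain ⟨m₂, hm₂⟩ := exists_cube_subset_centeredCube c l
  set m := max m₁ m₂ + 1
  have hQ : cube n c l ⊆ centeredCube n m := hm₂.trans (centeredCube_mono (by omega))
  have hpos : 0 < (∫⁻ z in centeredCube n m₁, ENNReal.ofReal |h z|) / volume (centeredCube n m) :=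
    ENNReal.div_pos hm₁.ne' (volume_cube_ne_top _ _)
  refine (hpos.trans_le (le_iInf₂ fun x hx => ?_)).ne'
  exact (ENNReal.div_le_div_right (lintegral_mono_set (centeredCube_mono (by omega))) _).trans
    (le_maxFn h (by positivity) (hQ hx))

theorem iInf_maxFn_ne_top {h : (Fin n → ℝ) → ℝ} (hfin : ∀ᵐ x ∂volume, maxFn n h x < ⊤)
    (c : Fin n → ℝ) {l : ℝ} (hl : 0 < l) :
    ⨅ x ∈ cube n c l, maxFn n h x ≠ ⊤ := by
  have : (ae (volume.restrict (cube n c l))).NeBot := ae_neBot.2 <| by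
    simpa using volume_cube_ne_zero c hl
  obtain ⟨x, hxQ, hx⟩ := ((ae_restrict_mem (measurableSet_cube c l)).and
    (ae_restrict_of_ae hfin)).exists
  exact ((iInf₂_le x hxQ).trans_lt hx).ne

end InfimumOnCube

section LevelSets

variable {n : ℕ} {h : (Fin n → ℝ) → ℝ} {c : Fin n → ℝ} {l : ℝ}

theorem maxFn_le_maxFn_indicator_add (hh : Measurable h) (hl : 0 < l) {x y : Fin n → ℝ}
    (hx : x ∈ cube n c l) (hy : y ∈ cube n c l) :
    maxFn n h x ≤
      maxFn n ((cube n (fun i => c i - l) (3 * l)).indicator h) x + 3 ^ n * maxFn n h y := by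
  set Q₃ := cube n (fun i => c i - l) (3 * l)
  have hsplit : ∀ z, |h z| ≤ |Q₃.indicator h z| + |Q₃ᶜ.indicator h z| := fun z => by
    by_cases hz : z ∈ Q₃ <;> simp [hz]
  refine (maxFn_le_add hsplit (hh.indicator (measurableSet_cube _ _)) x).trans
    (add_le_add_right ?_ _)
  calc maxFn n (Q₃ᶜ.indicator h) x
      ≤ 3 ^ n * maxFn n (Q₃ᶜ.indicator h) y :=
        maxFn_le_three_pow_mul_maxFn hl (fun z hz => indicator_of_notMem (not_not.2 hz) _) hx hy
    _ ≤ 3 ^ n * maxFn n h y := by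
        gcongr
        exact maxFn_mono (fun z => by by_cases hz : z ∈ Q₃ᶜ <;> simp [hz]) y

theorem lintegral_indicator_cube_dilate_le (hl : 0 < l) {y : Fin n → ℝ} (hy : y ∈ cube n c l) :
    ∫⁻ z, ENNReal.ofReal |(cube n (fun i => c i - l) (3 * l)).indicator h z| ≤
      3 ^ n * volume (cube n c l) * maxFn n h y := by
  set Q₃ := cube n (fun i => c i - l) (3 * l)
  have hyQ₃ : y ∈ Q₃ := cube_subset_cube (fun i => by linarith) (fun i => by linarith) hy
  calc ∫⁻ z, ENNReal.ofReal |Q₃.indicator h z|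
      = ∫⁻ z in Q₃, ENNReal.ofReal |h z| := by
        rw [← lintegral_indicator (measurableSet_cube _ _)]
        congr 1 with z
        by_cases hz : z ∈ Q₃ <;> simp [Q₃] at hz ⊢ <;> simp [hz]
    _ ≤ maxFn n h y * volume Q₃ := setLIntegral_cube_le_maxFn_mul h (by linarith) hyQ₃
    _ = 3 ^ n * volume (cube n c l) * maxFn n h y := by
        rw [volume_cube_mul c _ l (by norm_num : (0 : ℝ) ≤ 3), ENNReal.ofReal_ofNat]
        ring

theorem mul_volume_cube_inter_lt_maxFn_le (hh : Measurable h) (hl : 0 < l) {y : Fin n → ℝ}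
    (hy : y ∈ cube n c l) (a : ℝ≥0∞) :
    a * volume (cube n c l ∩ {x | a < maxFn n h x}) ≤
      2 * 24 ^ n * volume (cube n c l) * maxFn n h y := by
  have h24 : (24 : ℝ≥0∞) ^ n = 8 ^ n * 3 ^ n := by rw [← mul_pow]; norm_num
  by_cases ha : a ≤ 2 * 3 ^ n * maxFn n h y
  · calc a * volume (cube n c l ∩ {x | a < maxFn n h x})
        ≤ 2 * 3 ^ n * maxFn n h y * volume (cube n c l) :=
          mul_le_mul' ha (measure_mono inter_subset_left)
      _ = 2 * 3 ^ n * volume (cube n c l) * maxFn n h y := by ring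
      _ ≤ 2 * 24 ^ n * volume (cube n c l) * maxFn n h y := by gcongr; norm_num
  set Q₃ := cube n (fun i => c i - l) (3 * l)
  have hhalf : 3 ^ n * maxFn n h y ≤ a / 2 :=
    ENNReal.le_div_iff_mul_le (.inl two_ne_zero) (.inl ENNReal.ofNat_ne_top) |>.2 <| by
      rw [mul_comm, ← mul_assoc]; exact (not_le.1 ha).le
  have hsub : cube n c l ∩ {x | a < maxFn n h x} ⊆ {x | a / 2 < maxFn n (Q₃.indicator h) x} := by
    rintro x ⟨hx, hax⟩
    by_contra! hle
    have := (maxFn_le_maxFn_indicator_add hh hl hx hy).trans (add_le_add (not_lt.1 hle) hhalf)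
    rw [ENNReal.add_halves] at this
    exact (hax.trans_le this).false
  calc a * volume (cube n c l ∩ {x | a < maxFn n h x})
      ≤ 2 * (a / 2 * volume {x | a / 2 < maxFn n (Q₃.indicator h) x}) := by
        rw [← mul_assoc, ENNReal.mul_div_cancel two_ne_zero ENNReal.ofNat_ne_top]
        exact mul_le_mul_right (measure_mono hsub) a
    _ ≤ 2 * (8 ^ n * (3 ^ n * volume (cube n c l) * maxFn n h y)) :=
        mul_le_mul_right ((mul_volume_lt_maxFn_le _ _).trans
          (mul_le_mul_right (lintegral_indicator_cube_dilate_le hl hy) _)) 2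
    _ = 2 * 24 ^ n * volume (cube n c l) * maxFn n h y := by rw [h24]; ring

theorem mul_volume_cube_inter_lt_maxFn_le_iInf (hh : Measurable h) (hl : 0 < l) (a : ℝ≥0∞) :
    a * volume (cube n c l ∩ {x | a < maxFn n h x}) ≤
      2 * 24 ^ n * volume (cube n c l) * ⨅ y ∈ cube n c l, maxFn n h y := by
  have h₀ : 2 * 24 ^ n * volume (cube n c l) ≠ 0 := by simp [volume_cube_ne_zero c hl]
  have h₁ : 2 * 24 ^ n * volume (cube n c l) ≠ ⊤ :=
    ENNReal.mul_ne_top (ENNReal.mul_ne_top (by norm_num) (by simp)) (volume_cube_ne_top c l)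
  simp_rw [ENNReal.mul_iInf_of_ne h₀ h₁]
  exact le_iInf₂ fun y hy => mul_volume_cube_inter_lt_maxFn_le hh hl hy a

end LevelSets

section Weight

variable {X : Type*} [MeasurableSpace X] {μ : Measure X} {F : X → ℝ≥0∞} {p : ℝ}

theorem withDensity_toReal_rpow_le (hp : 1 ≤ p) {E : Set X} (hE : MeasurableSet E) {B : ℝ≥0∞}
    (hBF : ∀ x ∈ E, B ≤ F x) :
    μ.withDensity (fun x => ENNReal.ofReal ((F x).toReal ^ (1 - p))) E ≤ B ^ (1 - p) * μ E := by
  rw [withDensity_apply _ hE, ← setLIntegral_const]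
  refine setLIntegral_mono' hE fun x hx => ?_
  calc ENNReal.ofReal ((F x).toReal ^ (1 - p))
      ≤ F x ^ (1 - p) := by rw [ENNReal.toReal_rpow]; exact ENNReal.ofReal_toReal_le
    _ ≤ B ^ (1 - p) := by
        rw [← neg_sub, ENNReal.rpow_neg, ENNReal.rpow_neg]
        exact ENNReal.inv_le_inv.2 (ENNReal.rpow_le_rpow (hBF x hx) (by linarith))

theorem wkNormMu_indicator_toReal_rpow_inv_le (hp : 1 < p) (hF : Measurable F) {S : Set X}
    (hS : MeasurableSet S) {V : ℝ≥0∞} (hV : ∀ a, a * μ (S ∩ {x | a < F x}) ≤ V) :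
    wkNormMu (μ.withDensity fun x => ENNReal.ofReal ((F x).toReal ^ (1 - p))) (p / (p - 1))
      (S.indicator fun x => ((F x).toReal ^ (1 - p))⁻¹) ≤ V ^ ((p - 1) / p) := by
  have hp₀ : 0 < p - 1 := by linarith
  refine iSup₂_le fun t ht => ?_
  set a := ENNReal.ofReal t ^ (p - 1)⁻¹
  have hat : a ^ (p - 1) = ENNReal.ofReal t := ENNReal.rpow_inv_rpow hp₀.ne' _
  have ha₀ : a ≠ 0 := by simp [a, ht, hp₀]
  have ha : a ≠ ⊤ := ENNReal.rpow_ne_top_of_nonneg (by positivity) ENNReal.ofReal_ne_top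
  set E := S ∩ {x | a < F x}
  have hsub : {x | t < |S.indicator (fun x => ((F x).toReal ^ (1 - p))⁻¹) x|} ⊆ E := by
    intro x hx
    have hxS : x ∈ S := by
      by_contra hxS
      simp [indicator_of_notMem hxS, ht.not_gt] at hx
    refine ⟨hxS, ENNReal.rpow_inv_lt_iff hp₀ |>.2 ?_⟩
    have hw : ((F x).toReal ^ (1 - p))⁻¹ = (F x ^ (p - 1)).toReal := by
      rw [ENNReal.toReal_rpow, ← ENNReal.toReal_inv, ← ENNReal.rpow_neg, neg_sub]
    replace hx : t < (F x ^ (p - 1)).toReal := by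
      simpa [indicator_of_mem hxS, hw] using hx
    exact ((ENNReal.ofReal_lt_ofReal_iff (ht.trans hx)).2 hx).trans_le ENNReal.ofReal_toReal_le
  have hE : MeasurableSet E := hS.inter (measurableSet_lt measurable_const hF)
  have hq : 0 ≤ (p - 1) / p := by positivity
  calc ENNReal.ofReal t *
        μ.withDensity (fun x => ENNReal.ofReal ((F x).toReal ^ (1 - p)))
          {x | t < |S.indicator (fun x => ((F x).toReal ^ (1 - p))⁻¹) x|} ^ (1 / (p / (p - 1)))
      ≤ (a ^ p) ^ ((p - 1) / p) *
          μ.withDensity (fun x => ENNReal.ofReal ((F x).toReal ^ (1 - p))) E ^ ((p - 1) / p) := by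
        rw [one_div_div, ← ENNReal.rpow_mul, mul_div_cancel₀ _ (by linarith), hat]
        gcongr
    _ = (a ^ p * μ.withDensity (fun x => ENNReal.ofReal ((F x).toReal ^ (1 - p))) E) ^
          ((p - 1) / p) := (ENNReal.mul_rpow_of_nonneg _ _ hq).symm
    _ ≤ (a ^ p * (a ^ (1 - p) * μ E)) ^ ((p - 1) / p) := by
        gcongr
        exact withDensity_toReal_rpow_le hp.le hE fun x hx => hx.2.le
    _ = (a * μ E) ^ ((p - 1) / p) := by
        rw [← mul_assoc, ← ENNReal.rpow_add _ _ ha₀ ha, add_sub_cancel, ENNReal.rpow_one]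
    _ ≤ V ^ ((p - 1) / p) := by gcongr; exact hV a

theorem withDensity_rpow_mul_wkNormMu_le (hp : 1 < p) (hF : Measurable F) {S : Set X}
    (hS : MeasurableSet S) {B K : ℝ≥0∞} (hB₀ : B ≠ 0) (hB : B ≠ ⊤) (hBF : ∀ x ∈ S, B ≤ F x)
    (hdist : ∀ a, a * μ (S ∩ {x | a < F x}) ≤ K * μ S * B) :
    μ.withDensity (fun x => ENNReal.ofReal ((F x).toReal ^ (1 - p))) S ^ (1 / p) *
        wkNormMu (μ.withDensity fun x => ENNReal.ofReal ((F x).toReal ^ (1 - p))) (p / (p - 1))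
          (S.indicator fun x => ((F x).toReal ^ (1 - p))⁻¹) ≤
      K ^ ((p - 1) / p) * μ S := by
  have hp₀ : 0 < p := by linarith
  have hq : 0 ≤ (p - 1) / p := div_nonneg (by linarith) hp₀.le
  calc _ ≤ (B ^ (1 - p) * μ S) ^ (1 / p) * (K * μ S * B) ^ ((p - 1) / p) := by
        gcongr
        · exact withDensity_toReal_rpow_le hp.le hS hBF
        · exact wkNormMu_indicator_toReal_rpow_inv_le hp hF hS hdist
    _ = K ^ ((p - 1) / p) * μ S ^ (1 / p + (p - 1) / p) *
          B ^ ((1 - p) * (1 / p) + (p - 1) / p) := by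
        rw [ENNReal.rpow_add_of_nonneg _ _ (by positivity) hq, ENNReal.rpow_add _ _ hB₀ hB,
          ENNReal.mul_rpow_of_nonneg _ _ (by positivity), ENNReal.mul_rpow_of_nonneg _ _ hq,
          ENNReal.mul_rpow_of_nonneg _ _ hq, ENNReal.rpow_mul]
        ring
    _ = K ^ ((p - 1) / p) * μ S := by
        rw [← add_div, add_sub_cancel, div_self hp₀.ne', ENNReal.rpow_one,
          show (1 - p) * (1 / p) + (p - 1) / p = 0 by ring, ENNReal.rpow_zero, mul_one]

/-- for `1 < p < ∞` there is a constant `C = C(n,p) < ∞` such that for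
every `h ∈ L¹_loc(ℝⁿ)`, `h ≠ 0`, with `Mh < ∞` a.e., the weight `w = (Mh)^{1-p}`
satisfies `[w]_{A_p^𝓡} ≤ C`. -/
theorem stmt16 (n : ℕ) (p : ℝ) (hp : 1 < p) :
    ∃ C : ℝ≥0∞, C < ⊤ ∧
      ∀ h : (Fin n → ℝ) → ℝ, Measurable h → LocallyIntegrable h volume →
        ¬ (∀ᵐ x ∂volume, h x = 0) → (∀ᵐ x ∂volume, maxFn n h x < ⊤) →
        ApRConst n p (fun x => (maxFn n h x).toReal ^ (1 - p)) ≤ C := by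
  refine ⟨(2 * 24 ^ n) ^ ((p - 1) / p),
    ENNReal.rpow_lt_top_of_nonneg (div_nonneg (by linarith) (by linarith))
      (ENNReal.mul_ne_top (by norm_num) (by simp)), ?_⟩
  intro h hh _ hne hfin
  refine iSup₂_le fun c l => iSup_le fun hl => ENNReal.div_le_of_le_mul ?_
  exact withDensity_rpow_mul_wkNormMu_le hp (measurable_maxFn h) (measurableSet_cube c l)
    (iInf_maxFn_ne_zero hh hne c l) (iInf_maxFn_ne_top hfin c hl) (fun x hx => iInf₂_le x hx)
    (mul_volume_cube_inter_lt_maxFn_le_iInf hh hl)
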